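/- arXiv:2105.02537 — 2 statements merged into one kernel-verified Lean document; each statement's English description precedes it below -/
import Mathlib

section
/- In a weak brace S, for all a, b ∈ S: ρ_b(a) = (λ_a(b))⁻ ∘ a ∘ b, where λ_a(b) = -a + a∘b and ρ_b(a) = (a⁻+b)⁻∘b. -/
/-!
Put `c = a⁻ + b`. The brace axiom gives `-a + a∘b = a∘c`, so the right-hand side is
`c⁻∘(a⁻∘a)∘b`, and it suffices that the idempotent `e = a⁻∘a = -a⁻ + a⁻` fixes `c`, i.e.
`e∘c = c` (then `c⁻∘e = c⁻`). Two facts about an additive idempotent `p` do this: `p∘b = b + p`,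
and `p` is central in `(S,+)`. Hence `e∘c = a⁻ + b + e = (a⁻ + e) + b = c`.
-/

/-- A weak (left) brace: `(S,+)` and `(S,∘)` are inverse semigroups (with designated
inverse maps `neg` and `inv`), satisfying `a∘(b+c) = a∘b - a + a∘c` and `a∘a⁻ = -a + a`. -/
structure WeakBrace (S : Type*) where
  add : S → S → S
  mul : S → S → S
  neg : S → S
  inv : S → S
  add_assoc : ∀ a b c : S, add (add a b) c = add a (add b c)
  mul_assoc : ∀ a b c : S, mul (mul a b) c = mul a (mul b c)
  add_neg_add : ∀ a : S, add (add a (neg a)) a = a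
  neg_add_neg : ∀ a : S, add (add (neg a) a) (neg a) = neg a
  neg_unique : ∀ a x : S, add (add a x) a = a → add (add x a) x = x → x = neg a
  mul_inv_mul : ∀ a : S, mul (mul a (inv a)) a = a
  inv_mul_inv : ∀ a : S, mul (mul (inv a) a) (inv a) = inv a
  inv_unique : ∀ a x : S, mul (mul a x) a = a → mul (mul x a) x = x → x = inv a
  distrib : ∀ a b c : S, mul a (add b c) = add (add (mul a b) (neg a)) (mul a c)
  mul_inv_eq : ∀ a : S, mul a (inv a) = add (neg a) a

structure IsInverseSemigroup {S : Type*} (op : S → S → S) (iv : S → S) : Prop where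
  assoc : ∀ a b c : S, op (op a b) c = op a (op b c)
  op_iv_op : ∀ a : S, op (op a (iv a)) a = a
  iv_op_iv : ∀ a : S, op (op (iv a) a) (iv a) = iv a
  eq_iv : ∀ a x : S, op (op a x) a = a → op (op x a) x = x → x = iv a

namespace IsInverseSemigroup

variable {S : Type*} {op : S → S → S} {iv : S → S}

local infixl:70 " ⬝ " => op
local prefix:max "ι" => iv

theorem iv_iv (h : IsInverseSemigroup op iv) (a : S) : ι(ι a) = a :=
  (h.eq_iv (ι a) a (h.iv_op_iv a) (h.op_iv_op a)).symm

theorem iv_eq_self_of_idem (h : IsInverseSemigroup op iv) {p : S} (hp : p ⬝ p = p) :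
    ι p = p :=
  (h.eq_iv p p (by rw [hp, hp]) (by rw [hp, hp])).symm

theorem op_iv_idem (h : IsInverseSemigroup op iv) (a : S) :
    (a ⬝ ι a) ⬝ (a ⬝ ι a) = a ⬝ ι a := by
  rw [← h.assoc, h.op_iv_op]

theorem iv_op_idem (h : IsInverseSemigroup op iv) (a : S) :
    (ι a ⬝ a) ⬝ (ι a ⬝ a) = ι a ⬝ a := by
  rw [← h.assoc, h.iv_op_iv]

theorem idem_op_op (h : IsInverseSemigroup op iv) {p : S} (hp : p ⬝ p = p) (y : S) :
    p ⬝ (p ⬝ y) = p ⬝ y := by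
  rw [← h.assoc, hp]

/-- `q ⬝ ι(p ⬝ q) ⬝ p` is an inverse of `p ⬝ q`, so it is `ι(p ⬝ q)`; that makes `ι(p ⬝ q)`,
and with it `p ⬝ q`, idempotent. -/
theorem op_idem_of_idem (h : IsInverseSemigroup op iv) {p q : S} (hp : p ⬝ p = p)
    (hq : q ⬝ q = q) : (p ⬝ q) ⬝ (p ⬝ q) = p ⬝ q := by
  have hp' := h.idem_op_op hp
  have hq' := h.idem_op_op hq
  have hx : (q ⬝ ι(p ⬝ q)) ⬝ p = ι(p ⬝ q) := by
    apply h.eq_iv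
    · calc _ = ((p ⬝ q) ⬝ ι(p ⬝ q)) ⬝ (p ⬝ q) := by simp only [h.assoc, hp', hq']
        _ = p ⬝ q := h.op_iv_op _
    · calc _ = (q ⬝ ((ι(p ⬝ q) ⬝ (p ⬝ q)) ⬝ ι(p ⬝ q))) ⬝ p := by
            simp only [h.assoc, hp', hq']
        _ = (q ⬝ ι(p ⬝ q)) ⬝ p := by rw [h.iv_op_iv]
  have hxx : ι(p ⬝ q) ⬝ ι(p ⬝ q) = ι(p ⬝ q) := by
    calc ι(p ⬝ q) ⬝ ι(p ⬝ q) = ((q ⬝ ι(p ⬝ q)) ⬝ p) ⬝ ((q ⬝ ι(p ⬝ q)) ⬝ p) := by rw [hx]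
      _ = (q ⬝ ((ι(p ⬝ q) ⬝ (p ⬝ q)) ⬝ ι(p ⬝ q))) ⬝ p := by simp only [h.assoc]
      _ = ι(p ⬝ q) := by rw [h.iv_op_iv, hx]
  have hpq : p ⬝ q = ι(p ⬝ q) :=
    calc p ⬝ q = ι(ι(p ⬝ q)) := (h.iv_iv _).symm
      _ = ι(p ⬝ q) := h.iv_eq_self_of_idem hxx
  rw [hpq]
  exact hxx

theorem idem_comm (h : IsInverseSemigroup op iv) {p q : S} (hp : p ⬝ p = p)
    (hq : q ⬝ q = q) : p ⬝ q = q ⬝ p := by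
  have hp' := h.idem_op_op hp
  have hq' := h.idem_op_op hq
  have hqp : q ⬝ p = ι(p ⬝ q) := by
    apply h.eq_iv
    · calc _ = (p ⬝ q) ⬝ (p ⬝ q) := by simp only [h.assoc, hp', hq']
        _ = p ⬝ q := h.op_idem_of_idem hp hq
    · calc _ = (q ⬝ p) ⬝ (q ⬝ p) := by simp only [h.assoc, hp', hq']
        _ = q ⬝ p := h.op_idem_of_idem hq hp
  rw [hqp, h.iv_eq_self_of_idem (h.op_idem_of_idem hp hq)]

theorem iv_op (h : IsInverseSemigroup op iv) (a b : S) : ι(a ⬝ b) = ι b ⬝ ι a := by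
  have hcomm := h.idem_comm (h.op_iv_idem b) (h.iv_op_idem a)
  refine (h.eq_iv (a ⬝ b) (ι b ⬝ ι a) ?_ ?_).symm
  · calc _ = (a ⬝ ((b ⬝ ι b) ⬝ (ι a ⬝ a))) ⬝ b := by simp only [h.assoc]
      _ = ((a ⬝ ι a) ⬝ a) ⬝ ((b ⬝ ι b) ⬝ b) := by rw [hcomm]; simp only [h.assoc]
      _ = a ⬝ b := by rw [h.op_iv_op, h.op_iv_op]
  · calc _ = (ι b ⬝ ((ι a ⬝ a) ⬝ (b ⬝ ι b))) ⬝ ι a := by simp only [h.assoc]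
      _ = ((ι b ⬝ b) ⬝ ι b) ⬝ ((ι a ⬝ a) ⬝ ι a) := by rw [← hcomm]; simp only [h.assoc]
      _ = ι b ⬝ ι a := by rw [h.iv_op_iv, h.iv_op_iv]

theorem iv_op_eq_iv_of_op_eq (h : IsInverseSemigroup op iv) {e c : S} (he : e ⬝ e = e)
    (hc : e ⬝ c = c) : ι c ⬝ e = ι c := by
  rw [← h.iv_eq_self_of_idem he, ← h.iv_op, hc]

end IsInverseSemigroup

namespace WeakBrace

variable {S : Type*} (W : WeakBrace S)

theorem isInverseSemigroup_add : IsInverseSemigroup W.add W.neg :=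
  ⟨W.add_assoc, W.add_neg_add, W.neg_add_neg, W.neg_unique⟩

theorem isInverseSemigroup_mul : IsInverseSemigroup W.mul W.inv :=
  ⟨W.mul_assoc, W.mul_inv_mul, W.inv_mul_inv, W.inv_unique⟩

local infixl:65 " ⊹ " => W.add
local infixl:70 " ⬝ " => W.mul
local prefix:max "∼" => W.neg
local postfix:max "⁻" => W.inv

theorem neg_neg (a : S) : ∼∼a = a := W.isInverseSemigroup_add.iv_iv a

theorem inv_inv (a : S) : a⁻⁻ = a := W.isInverseSemigroup_mul.iv_iv a

theorem neg_add (a b : S) : ∼(a ⊹ b) = ∼b ⊹ ∼a := W.isInverseSemigroup_add.iv_op a b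

theorem inv_mul (a b : S) : (a ⬝ b)⁻ = b⁻ ⬝ a⁻ := W.isInverseSemigroup_mul.iv_op a b

theorem neg_mul (a b : S) : ∼(a ⬝ b) = (∼a ⊹ a ⬝ ∼b) ⊹ ∼a := by
  refine (W.neg_unique (a ⬝ b) _ ?_ ?_).symm
  · calc (a ⬝ b ⊹ ((∼a ⊹ a ⬝ ∼b) ⊹ ∼a)) ⊹ a ⬝ b
        = ((a ⬝ b ⊹ ∼a) ⊹ a ⬝ ∼b) ⊹ (∼a ⊹ a ⬝ b) := by simp only [W.add_assoc]
      _ = (a ⬝ (b ⊹ ∼b) ⊹ ∼a) ⊹ a ⬝ b := by rw [← W.distrib, W.add_assoc]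
      _ = a ⬝ b := by rw [← W.distrib, W.add_neg_add]
  · calc (((∼a ⊹ a ⬝ ∼b) ⊹ ∼a) ⊹ a ⬝ b) ⊹ ((∼a ⊹ a ⬝ ∼b) ⊹ ∼a)
        = ∼a ⊹ (((a ⬝ ∼b ⊹ ∼a) ⊹ a ⬝ b) ⊹ (∼a ⊹ (a ⬝ ∼b ⊹ ∼a))) := by
          simp only [W.add_assoc]
      _ = ∼a ⊹ (((a ⬝ (∼b ⊹ b) ⊹ ∼a) ⊹ a ⬝ ∼b) ⊹ ∼a) := by
          rw [← W.distrib]; simp only [W.add_assoc]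
      _ = (∼a ⊹ a ⬝ ∼b) ⊹ ∼a := by rw [← W.distrib, W.neg_add_neg, W.add_assoc]

/-- `∼(a ⬝ b)` ends with `∼a`, which absorbs `a ⊹ ∼a` on its right; now negate. -/
theorem add_neg_add_mul (a b : S) : (a ⊹ ∼a) ⊹ a ⬝ b = a ⬝ b := by
  have h : ∼(a ⬝ b) ⊹ (a ⊹ ∼a) = ∼(a ⬝ b) := by
    rw [W.neg_mul, W.add_assoc _ (∼a), ← W.add_assoc (∼a), W.neg_add_neg]
  simpa only [W.neg_add, W.neg_neg] using congrArg W.neg h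

theorem mul_add_neg_add (a b : S) : a ⬝ b ⊹ (∼a ⊹ a) = a ⬝ b := by
  have h : (∼a ⊹ a) ⊹ ∼(a ⬝ b) = ∼(a ⬝ b) := by
    rw [W.neg_mul, ← W.add_assoc, ← W.add_assoc, W.neg_add_neg]
  simpa only [W.neg_add, W.neg_neg] using congrArg W.neg h

theorem neg_add_mul (a b : S) : ∼a ⊹ a ⬝ b = a ⬝ (a⁻ ⊹ b) := by
  rw [W.distrib, W.mul_inv_eq, W.neg_add_neg]

section Idempotent

variable {p q : S}

theorem neg_eq_self_of_idem (hp : p ⊹ p = p) : ∼p = p :=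
  W.isInverseSemigroup_add.iv_eq_self_of_idem hp

theorem mul_self_of_idem (hp : p ⊹ p = p) : p ⬝ p = p := by
  simpa only [W.mul_inv_eq, W.neg_eq_self_of_idem hp, hp] using W.mul_inv_mul p

theorem idem_add_mul (hp : p ⊹ p = p) (u : S) : p ⊹ p ⬝ u = p ⬝ u := by
  simpa only [W.neg_eq_self_of_idem hp, hp] using W.add_neg_add_mul p u

theorem idem_mul_add_idem (hp : p ⊹ p = p) (u : S) : p ⬝ u ⊹ p = p ⬝ u := by
  simpa only [W.neg_eq_self_of_idem hp, hp] using W.mul_add_neg_add p u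

theorem idem_mul_add (hp : p ⊹ p = p) (u v : S) : p ⬝ (u ⊹ v) = p ⬝ u ⊹ p ⬝ v := by
  rw [W.distrib, W.neg_eq_self_of_idem hp, W.idem_mul_add_idem hp]

theorem idem_mul_idem (hp : p ⊹ p = p) (hq : q ⊹ q = q) : p ⬝ q = p ⊹ q := by
  have hcomm : ∀ {u v : S}, u ⊹ u = u → v ⊹ v = v → u ⬝ v = v ⬝ u := fun hu hv =>
    W.isInverseSemigroup_mul.idem_comm (W.mul_self_of_idem hu) (W.mul_self_of_idem hv)
  have hpq : (p ⊹ q) ⊹ (p ⊹ q) = p ⊹ q := W.isInverseSemigroup_add.op_idem_of_idem hp hq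
  have hpq_p : (p ⊹ q) ⬝ p = p ⬝ q := by
    rw [hcomm hpq hp, W.idem_mul_add hp, W.mul_self_of_idem hp, W.idem_add_mul hp]
  have hpq_q : (p ⊹ q) ⬝ q = p ⬝ q := by
    rw [hcomm hpq hq, W.idem_mul_add hq, W.mul_self_of_idem hq, W.idem_mul_add_idem hq,
      hcomm hq hp]
  calc p ⬝ q = p ⬝ (q ⊹ q) := by rw [hq]
    _ = (p ⊹ q) ⬝ p ⊹ (p ⊹ q) ⬝ q := by rw [W.idem_mul_add hp, hpq_p, hpq_q]
    _ = (p ⊹ q) ⬝ (p ⊹ q) := (W.idem_mul_add hpq p q).symm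
    _ = p ⊹ q := W.mul_self_of_idem hpq

/-- With `g = ∼b ⊹ b`, the idempotent `p ⊹ g = (b ⊹ p) ⬝ (b ⊹ p)⁻` fixes `b ⊹ p`, which forces
`(p ⊹ g) ⬝ b = b ⊹ p`; multiplying on the left by `p` changes nothing. -/
theorem idem_mul (hp : p ⊹ p = p) (b : S) : p ⬝ b = b ⊹ p := by
  set g := ∼b ⊹ b with hg_def
  have hg : g ⊹ g = g := W.isInverseSemigroup_add.iv_op_idem b
  have hgp : g ⊹ p = p ⊹ g := W.isInverseSemigroup_add.idem_comm hg hp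
  have hpg : (p ⊹ g) ⊹ (p ⊹ g) = p ⊹ g := W.isInverseSemigroup_add.op_idem_of_idem hp hg
  have hpg_p : (p ⊹ g) ⊹ p = p ⊹ g := by rw [W.add_assoc, hgp, ← W.add_assoc, hp]
  have hmul_inv : (b ⊹ p) ⬝ (b ⊹ p)⁻ = p ⊹ g := by
    rw [W.mul_inv_eq, W.neg_add, W.neg_eq_self_of_idem hp, W.add_assoc, ← W.add_assoc (∼b), ← hg_def,
      ← W.add_assoc, hpg_p]
  have hpg_b : (p ⊹ g) ⬝ b = b ⊹ p :=
    calc (p ⊹ g) ⬝ b = (p ⊹ g) ⬝ b ⊹ (p ⊹ g) ⬝ p := by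
          rw [W.idem_mul_idem hpg hp, hpg_p, W.idem_mul_add_idem hpg]
      _ = (p ⊹ g) ⬝ (b ⊹ p) := (W.idem_mul_add hpg b p).symm
      _ = b ⊹ p := by rw [← hmul_inv, W.mul_inv_mul]
  have hp_pg : p ⬝ (p ⊹ g) = p ⊹ g := by rw [W.idem_mul_idem hp hpg, ← W.add_assoc, hp]
  calc p ⬝ b = p ⬝ b ⊹ p ⬝ p := by rw [W.mul_self_of_idem hp, W.idem_mul_add_idem hp]
    _ = p ⬝ (b ⊹ p) := (W.idem_mul_add hp b p).symm
    _ = b ⊹ p := by rw [← hpg_b, ← W.mul_assoc, hp_pg]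

theorem idem_add_comm (hp : p ⊹ p = p) (x : S) : p ⊹ x = x ⊹ p := by
  have hfix : ∀ y, p ⊹ (y ⊹ p) = y ⊹ p := fun y => by
    simpa only [W.idem_mul hp] using W.idem_add_mul hp y
  have h := congrArg W.neg (hfix (∼x))
  simp only [W.neg_add, W.neg_neg, W.neg_eq_self_of_idem hp] at h
  rw [← h, W.add_assoc, hfix]

end Idempotent

theorem mul_inv_mul_add (x b : S) : x ⬝ x⁻ ⬝ (x ⊹ b) = x ⊹ b := by
  have he : (∼x ⊹ x) ⊹ (∼x ⊹ x) = ∼x ⊹ x := W.isInverseSemigroup_add.iv_op_idem x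
  rw [W.mul_inv_eq, W.idem_mul he, W.add_assoc, ← W.idem_add_comm he b, ← W.add_assoc,
    ← W.add_assoc, W.add_neg_add]

theorem inv_add_mul_mul_inv (x b : S) : (x ⊹ b)⁻ ⬝ (x ⬝ x⁻) = (x ⊹ b)⁻ :=
  W.isInverseSemigroup_mul.iv_op_eq_iv_of_op_eq (W.isInverseSemigroup_mul.op_iv_idem x)
    (W.mul_inv_mul_add x b)

end WeakBrace

theorem weakBrace_rho_formula {S : Type*} (W : WeakBrace S) :
    ∀ a b : S, W.mul (W.inv (W.add (W.inv a) b)) b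
      = W.mul (W.mul (W.inv (W.add (W.neg a) (W.mul a b))) a) b := by
  intro a b
  have hfix := W.inv_add_mul_mul_inv (W.inv a) b
  rw [W.inv_inv] at hfix
  rw [W.neg_add_mul, W.inv_mul, W.mul_assoc _ (W.inv a) a, hfix]
end

section
/- Let (S,∘) be an inverse semigroup. Then the map s : S×S → S×S given by s(a,b) = (a∘b∘b⁻, a⁻∘a∘b) is an idempotent set-theoretic solution of the Yang-Baxter equation (s² = s). -/
/-!
Idempotents of an inverse semigroup commute: the inverse of `e * f` is idempotent, hence so is
`e * f`, and then `f * e` is an inverse of `e * f` too. Hence `(a * b)⁻¹ = b⁻¹ * a⁻¹`, and for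
an idempotent `e` the domain `dom a = a⁻¹ * a` and range `ran a = a * a⁻¹` satisfy
`dom (a * e) = dom a * e` and `ran (e * b) = e * ran b`.
If `s (a, b) = (x, y)`, then `dom x = dom a * ran b = ran y`, which is exactly `s (x, y) = (x, y)`.
Both sides of the braid relation send `(a, b, c)` to
`(a * ran (b * c), dom a * b * ran c, dom (a * b) * c)`.
-/

class InverseSemigroup (S : Type*) extends Semigroup S, Inv S where
  mul_inv_mul_self (a : S) : a * a⁻¹ * a = a
  inv_mul_inv_self (a : S) : a⁻¹ * a * a⁻¹ = a⁻¹
  eq_inv_of_mul_mul_self (a x : S) : a * x * a = a → x * a * x = x → x = a⁻¹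

section YangBaxter

variable {X : Type*}

def onFirstTwo (r : X × X → X × X) (p : X × X × X) : X × X × X :=
  ((r (p.1, p.2.1)).1, (r (p.1, p.2.1)).2, p.2.2)

def onLastTwo (r : X × X → X × X) (p : X × X × X) : X × X × X := (p.1, r p.2)

def IsYangBaxterSolution (r : X × X → X × X) : Prop :=
  onFirstTwo r ∘ onLastTwo r ∘ onFirstTwo r = onLastTwo r ∘ onFirstTwo r ∘ onLastTwo r

end YangBaxter

namespace InverseSemigroup

variable {S : Type*} [InverseSemigroup S] {e f : S}

theorem inv_inv (a : S) : a⁻¹⁻¹ = a :=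
  (eq_inv_of_mul_mul_self a⁻¹ a (inv_mul_inv_self a) (mul_inv_mul_self a)).symm

theorem isIdempotentElem_mul_inv (a : S) : IsIdempotentElem (a * a⁻¹) := by
  rw [IsIdempotentElem, ← mul_assoc, mul_inv_mul_self]

theorem isIdempotentElem_inv_mul (a : S) : IsIdempotentElem (a⁻¹ * a) := by
  rw [IsIdempotentElem, ← mul_assoc, inv_mul_inv_self]

theorem mul_inv_mul_self_right (a : S) : a * (a⁻¹ * a) = a := by
  rw [← mul_assoc, mul_inv_mul_self]

theorem inv_mul_inv_self_right (a : S) : a⁻¹ * (a * a⁻¹) = a⁻¹ := by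
  rw [← mul_assoc, inv_mul_inv_self]

theorem mul_inv_mul_self_assoc (a x : S) : a * (a⁻¹ * (a * x)) = a * x := by
  rw [← mul_assoc, ← mul_assoc, mul_inv_mul_self]

theorem inv_mul_inv_self_assoc (a x : S) : a⁻¹ * (a * (a⁻¹ * x)) = a⁻¹ * x := by
  rw [← mul_assoc, ← mul_assoc, inv_mul_inv_self]

theorem inv_eq_self_of_isIdempotentElem (he : IsIdempotentElem e) : e⁻¹ = e :=
  (eq_inv_of_mul_mul_self e e (by rw [he.eq, he.eq]) (by rw [he.eq, he.eq])).symm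

/-- The inverse `w` of `e * f` is fixed by `w ↦ f * w * e`, which makes it idempotent. -/
theorem isIdempotentElem_mul (he : IsIdempotentElem e) (hf : IsIdempotentElem f) :
    IsIdempotentElem (e * f) := by
  set w := (e * f)⁻¹
  have hw : f * w * e = w := by
    refine eq_inv_of_mul_mul_self (e * f) (f * w * e) ?_ ?_
    · calc e * f * (f * w * e) * (e * f) = e * f * w * (e * f) := by
            simp only [mul_assoc, hf.mul_self_mul, he.mul_self_mul]
        _ = e * f := mul_inv_mul_self (e * f)
    · calc f * w * e * (e * f) * (f * w * e) = f * (w * (e * f) * w) * e := by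
            simp only [mul_assoc, hf.mul_self_mul, he.mul_self_mul]
        _ = f * w * e := by rw [inv_mul_inv_self, mul_assoc]
  have hww : IsIdempotentElem w := by
    calc w * w = f * (w * (e * f) * w) * e := by
          conv_lhs => rw [← hw]
          simp only [mul_assoc]
      _ = w := by rw [inv_mul_inv_self]; exact hw
  rwa [← inv_inv (e * f), inv_eq_self_of_isIdempotentElem hww]

theorem commute_of_isIdempotentElem (he : IsIdempotentElem e) (hf : IsIdempotentElem f) :
    Commute e f := by
  have hef := isIdempotentElem_mul he hf
  have hfe := isIdempotentElem_mul hf he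
  have h : f * e = (e * f)⁻¹ := by
    refine eq_inv_of_mul_mul_self (e * f) (f * e) ?_ ?_
    · calc e * f * (f * e) * (e * f) = e * f * (e * f) := by
            simp only [mul_assoc, hf.mul_self_mul, he.mul_self_mul]
        _ = e * f := hef
    · calc f * e * (e * f) * (f * e) = f * e * (f * e) := by
            simp only [mul_assoc, hf.mul_self_mul, he.mul_self_mul]
        _ = f * e := hfe
  rw [Commute, SemiconjBy, h, inv_eq_self_of_isIdempotentElem hef]

theorem mul_inv_rev (a b : S) : (a * b)⁻¹ = b⁻¹ * a⁻¹ := by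
  have hc := commute_of_isIdempotentElem (isIdempotentElem_mul_inv b) (isIdempotentElem_inv_mul a)
  refine (eq_inv_of_mul_mul_self (a * b) (b⁻¹ * a⁻¹) ?_ ?_).symm
  · calc a * b * (b⁻¹ * a⁻¹) * (a * b) = a * (b * b⁻¹ * (a⁻¹ * a)) * b := by
          simp only [mul_assoc]
      _ = a * b := by
          rw [hc.eq]; simp only [mul_assoc, mul_inv_mul_self_assoc, mul_inv_mul_self_right]
  · calc b⁻¹ * a⁻¹ * (a * b) * (b⁻¹ * a⁻¹) = b⁻¹ * (a⁻¹ * a * (b * b⁻¹)) * a⁻¹ := by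
          simp only [mul_assoc]
      _ = b⁻¹ * a⁻¹ := by
          rw [← hc.eq]; simp only [mul_assoc, inv_mul_inv_self_assoc, inv_mul_inv_self_right]

theorem commute_mul_inv_inv_mul (a b : S) : Commute (a * a⁻¹) (b⁻¹ * b) :=
  commute_of_isIdempotentElem (isIdempotentElem_mul_inv a) (isIdempotentElem_inv_mul b)

theorem inv_mul_self_mul_idempotent (he : IsIdempotentElem e) (a : S) :
    (a * e)⁻¹ * (a * e) = a⁻¹ * a * e :=
  calc (a * e)⁻¹ * (a * e) = e * (a⁻¹ * a) * e := by
        rw [mul_inv_rev, inv_eq_self_of_isIdempotentElem he]; simp only [mul_assoc]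
    _ = a⁻¹ * a * e := by
        rw [(commute_of_isIdempotentElem he (isIdempotentElem_inv_mul a)).eq, he.mul_mul_self]

theorem idempotent_mul_mul_inv_self (he : IsIdempotentElem e) (b : S) :
    e * b * (e * b)⁻¹ = e * (b * b⁻¹) :=
  calc e * b * (e * b)⁻¹ = e * (b * b⁻¹ * e) := by
        rw [mul_inv_rev, inv_eq_self_of_isIdempotentElem he]; simp only [mul_assoc]
    _ = e * (b * b⁻¹) := by
        rw [← (commute_of_isIdempotentElem he (isIdempotentElem_mul_inv b)).eq, he.mul_self_mul]

theorem mul_mul_inv_self_mul_inv_self (a b : S) :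
    a * (b * b⁻¹) * (a * (b * b⁻¹))⁻¹ = a * b * (a * b)⁻¹ := by
  simp only [mul_inv_rev, inv_inv, mul_assoc, mul_inv_mul_self_assoc]

theorem inv_mul_self_mul_inv_mul_self (a b : S) :
    (a⁻¹ * a * b)⁻¹ * (a⁻¹ * a * b) = (a * b)⁻¹ * (a * b) := by
  simp only [mul_inv_rev, inv_inv, mul_assoc, inv_mul_inv_self_assoc]

def solution (p : S × S) : S × S := (p.1 * p.2 * p.2⁻¹, p.1⁻¹ * p.1 * p.2)

theorem inv_mul_self_solution_fst (a b : S) :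
    (solution (a, b)).1⁻¹ * (solution (a, b)).1 = (solution (a, b)).2 * (solution (a, b)).2⁻¹ := by
  simp only [solution]
  rw [mul_assoc a b, inv_mul_self_mul_idempotent (isIdempotentElem_mul_inv b),
    idempotent_mul_mul_inv_self (isIdempotentElem_inv_mul a)]

theorem solution_solution (p : S × S) : solution (solution p) = solution p := by
  obtain ⟨a, b⟩ := p
  have h := inv_mul_self_solution_fst a b
  ext
  · rw [solution, mul_assoc, ← h, mul_inv_mul_self_right]
  · rw [solution, h, mul_inv_mul_self]

theorem onFirstTwo_onLastTwo_onFirstTwo_solution (a b c : S) :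
    (onFirstTwo solution ∘ onLastTwo solution ∘ onFirstTwo solution) (a, b, c) =
      (a * (b * c) * (b * c)⁻¹, a⁻¹ * a * b * (c * c⁻¹), (a * b)⁻¹ * (a * b) * c) := by
  simp only [Function.comp_apply, onFirstTwo, onLastTwo, solution, Prod.mk.injEq]
  refine ⟨?_, ?_, by rw [inv_mul_self_mul_inv_mul_self]⟩
  · calc a * b * b⁻¹ * (a⁻¹ * a * b * c * c⁻¹) * (a⁻¹ * a * b * c * c⁻¹)⁻¹
        = a * (b * b⁻¹) * (a⁻¹ * a * b * (c * c⁻¹) * (a⁻¹ * a * b * (c * c⁻¹))⁻¹) := by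
          simp only [mul_assoc]
      _ = a * (b * b⁻¹) * (a⁻¹ * a * (b * c * (b * c)⁻¹)) := by
          rw [mul_mul_inv_self_mul_inv_self, mul_assoc (a⁻¹ * a),
            idempotent_mul_mul_inv_self (isIdempotentElem_inv_mul a)]
      _ = a * (a⁻¹ * a) * (b * b⁻¹ * (b * c * (b * c)⁻¹)) :=
          (commute_mul_inv_inv_mul b a).mul_mul_mul_comm _ _
      _ = a * (b * c) * (b * c)⁻¹ := by
          simp only [mul_assoc, mul_inv_mul_self_assoc, mul_inv_mul_self_right]
  · calc (a * b * b⁻¹)⁻¹ * (a * b * b⁻¹) * (a⁻¹ * a * b * c * c⁻¹)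
        = a⁻¹ * a * (b * b⁻¹) * (a⁻¹ * a * (b * c * c⁻¹)) := by
          rw [mul_assoc a b, inv_mul_self_mul_idempotent (isIdempotentElem_mul_inv b)]
          simp only [mul_assoc]
      _ = a⁻¹ * a * (a⁻¹ * a) * (b * b⁻¹ * (b * c * c⁻¹)) :=
          (commute_mul_inv_inv_mul b a).mul_mul_mul_comm _ _
      _ = a⁻¹ * a * b * (c * c⁻¹) := by
          simp only [mul_assoc, inv_mul_inv_self_assoc, mul_inv_mul_self_assoc]

theorem onLastTwo_onFirstTwo_onLastTwo_solution (a b c : S) :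
    (onLastTwo solution ∘ onFirstTwo solution ∘ onLastTwo solution) (a, b, c) =
      (a * (b * c) * (b * c)⁻¹, a⁻¹ * a * b * (c * c⁻¹), (a * b)⁻¹ * (a * b) * c) := by
  simp only [Function.comp_apply, onFirstTwo, onLastTwo, solution, Prod.mk.injEq]
  refine ⟨by simp only [mul_inv_rev, inv_inv, mul_assoc, mul_inv_mul_self_assoc], ?_, ?_⟩
  · calc a⁻¹ * a * (b * c * c⁻¹) * (b⁻¹ * b * c) * (b⁻¹ * b * c)⁻¹
        = a⁻¹ * a * b * (c * c⁻¹) * (b⁻¹ * b * (c * c⁻¹)) := by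
          rw [mul_assoc _ (b⁻¹ * b * c), idempotent_mul_mul_inv_self (isIdempotentElem_inv_mul b)]
          simp only [mul_assoc]
      _ = a⁻¹ * a * b * (b⁻¹ * b) * (c * c⁻¹ * (c * c⁻¹)) :=
          (commute_mul_inv_inv_mul c b).mul_mul_mul_comm _ _
      _ = a⁻¹ * a * b * (c * c⁻¹) := by
          rw [(isIdempotentElem_mul_inv c).eq]
          simp only [mul_assoc, mul_inv_mul_self_assoc]
  · calc (a⁻¹ * a * (b * c * c⁻¹))⁻¹ * (a⁻¹ * a * (b * c * c⁻¹)) * (b⁻¹ * b * c)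
        = (a * b)⁻¹ * (a * b) * (c * c⁻¹) * (b⁻¹ * b * c) := by
          rw [inv_mul_self_mul_inv_mul_self, show a * (b * c * c⁻¹) = a * b * (c * c⁻¹) by
            simp only [mul_assoc], inv_mul_self_mul_idempotent (isIdempotentElem_mul_inv c)]
      _ = (a * b)⁻¹ * (a * b) * (b⁻¹ * b) * (c * c⁻¹ * c) :=
          (commute_mul_inv_inv_mul c b).mul_mul_mul_comm _ _
      _ = (a * b)⁻¹ * (a * b) * c := by
          rw [mul_inv_mul_self]
          simp only [mul_inv_rev, mul_assoc, mul_inv_mul_self_assoc]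

theorem isYangBaxterSolution_solution : IsYangBaxterSolution (solution (S := S)) := by
  funext ⟨a, b, c⟩
  rw [onFirstTwo_onLastTwo_onFirstTwo_solution, onLastTwo_onFirstTwo_onLastTwo_solution]

end InverseSemigroup

theorem inverseSemigroup_idempotent_solution {S : Type*} (mul : S → S → S) (inv : S → S)
    (mul_assoc : ∀ a b c : S, mul (mul a b) c = mul a (mul b c))
    (mul_inv_mul : ∀ a : S, mul (mul a (inv a)) a = a)
    (inv_mul_inv : ∀ a : S, mul (mul (inv a) a) (inv a) = inv a)
    (inv_unique : ∀ a x : S, mul (mul a x) a = a → mul (mul x a) x = x → x = inv a) :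
    let s : S × S → S × S := fun p =>
      (mul (mul p.1 p.2) (inv p.2), mul (mul (inv p.1) p.1) p.2)
    let s12 : S × S × S → S × S × S := fun p =>
      ((s (p.1, p.2.1)).1, (s (p.1, p.2.1)).2, p.2.2)
    let s23 : S × S × S → S × S × S := fun p => (p.1, s p.2)
    s12 ∘ s23 ∘ s12 = s23 ∘ s12 ∘ s23 ∧ s ∘ s = s := by
  let _ : InverseSemigroup S :=
    { mul, mul_assoc, inv,
      mul_inv_mul_self := mul_inv_mul
      inv_mul_inv_self := inv_mul_inv
      eq_inv_of_mul_mul_self := inv_unique }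
  exact ⟨InverseSemigroup.isYangBaxterSolution_solution,
    funext InverseSemigroup.solution_solution⟩
end
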